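/- arXiv:math/0511550 — 2 statements merged into one kernel-verified Lean document; each statement's English description precedes it below -/
import Mathlib

section
/- If g is a perfect Lie algebra with zero center, then every derivation of Der(g) is inner. -/
/-!
Since the center of `L` is zero, `ad : L → Der L` is injective, and `⁅d, ad x⁆ = ad (d x)` shows
that a derivation `D` of `Der L` is determined by its restriction to `ad L`: indeed
`ad (D d x) = D (ad (d x)) - ⁅d, D (ad x)⁆`. Since `L` is perfect, the identity
`D (ad ⁅x, y⁆) = ad (D (ad x) y - D (ad y) x)` shows that `D` maps `ad L` into itself, so
`D ∘ ad = ad ∘ E` for a linear map `E`, which is a derivation of `L` because `ad` is injective.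
Then `D` and `ad E` agree on `ad L`, hence everywhere.
-/

namespace LieDerivation

variable {R L : Type*} [CommRing R] [LieRing L] [LieAlgebra R L]

local notation "𝔻" => LieDerivation R L L

lemma lie_ad_der_eq_neg_ad_der (x : L) (d : 𝔻) : ⁅ad R L x, d⁆ = -ad R L (d x) := by
  rw [← lie_skew, lie_der_ad_eq_ad_der]

lemma apply_ad_lie (D : LieDerivation R 𝔻 𝔻) (x y : L) :
    D (ad R L ⁅x, y⁆) = ad R L (D (ad R L x) y - D (ad R L y) x) := by
  rw [LieHom.map_lie, apply_lie_eq_sub, lie_ad_der_eq_neg_ad_der, lie_ad_der_eq_neg_ad_der, map_sub]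
  abel

lemma apply_ad_mem_range_ad (hperf : ⁅(⊤ : LieIdeal R L), (⊤ : LieIdeal R L)⁆ = ⊤)
    (D : LieDerivation R 𝔻 𝔻) (z : L) :
    D (ad R L z) ∈ LinearMap.range (ad R L : L →ₗ[R] 𝔻) := by
  let S : Submodule R L :=
    (LinearMap.range (ad R L : L →ₗ[R] 𝔻)).comap ((D : 𝔻 →ₗ[R] 𝔻) ∘ₗ (ad R L : L →ₗ[R] 𝔻))
  have hbracket : LieSubmodule.toSubmodule ⁅(⊤ : LieIdeal R L), (⊤ : LieIdeal R L)⁆ ≤ S := by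
    rw [LieSubmodule.lieIdeal_oper_eq_linear_span', Submodule.span_le]
    rintro _ ⟨x, -, y, -, rfl⟩
    exact ⟨_, (apply_ad_lie D x y).symm⟩
  exact hbracket (by rw [hperf]; trivial)

lemma exists_ad_apply_eq_apply_ad (hinj : Function.Injective (ad R L))
    {D : LieDerivation R 𝔻 𝔻} (hD : ∀ z, D (ad R L z) ∈ LinearMap.range (ad R L : L →ₗ[R] 𝔻)) :
    ∃ E : 𝔻, ∀ z, ad R L (E z) = D (ad R L z) := by
  let E : L →ₗ[R] L := (LinearEquiv.ofInjective _ hinj).symm.toLinearMap ∘ₗ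
    ((D : 𝔻 →ₗ[R] 𝔻) ∘ₗ (ad R L : L →ₗ[R] 𝔻)).codRestrict _ hD
  have hE : ∀ z, ad R L (E z) = D (ad R L z) := fun z =>
    LinearEquiv.ofInjective_symm_apply (ad R L : L →ₗ[R] 𝔻) (h := hinj) _
  refine ⟨⟨E, fun x y => hinj ?_⟩, hE⟩
  show ad R L (E _) = _
  rw [map_sub, LieHom.map_lie, LieHom.map_lie, hE, hE, hE, LieHom.map_lie, apply_lie_eq_sub]

lemma ext_of_apply_ad (hinj : Function.Injective (ad R L)) {D₁ D₂ : LieDerivation R 𝔻 𝔻}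
    (h : ∀ z, D₁ (ad R L z) = D₂ (ad R L z)) : D₁ = D₂ := by
  ext d x
  have leibniz (D : LieDerivation R 𝔻 𝔻) :
      ad R L (D d x) = D (ad R L (d x)) - ⁅d, D (ad R L x)⁆ := by
    rw [← lie_der_ad_eq_ad_der, ← lie_der_ad_eq_ad_der, apply_lie_eq_add]
    abel
  exact hinj (by rw [leibniz, leibniz, h, h])

end LieDerivation

/-- If `g` is perfect with zero center, then every derivation of `Der(g)` is inner. -/
theorem derivation_of_derivation_isInner (K : Type*) (L : Type*) [Field K] [LieRing L]
    [LieAlgebra K L] (hperf : ⁅(⊤ : LieIdeal K L), (⊤ : LieIdeal K L)⁆ = ⊤)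
    (hc : LieAlgebra.center K L = ⊥)
    (D : LieDerivation K (LieDerivation K L L) (LieDerivation K L L)) :
    ∃ d : LieDerivation K L L, D = LieDerivation.ad K (LieDerivation K L L) d := by
  have hinj := LieDerivation.injective_ad_of_center_eq_bot hc
  obtain ⟨E, hE⟩ :=
    LieDerivation.exists_ad_apply_eq_apply_ad hinj (LieDerivation.apply_ad_mem_range_ad hperf D)
  refine ⟨E, LieDerivation.ext_of_apply_ad hinj fun z => ?_⟩
  rw [LieDerivation.ad_apply_apply, LieDerivation.lie_der_ad_eq_ad_der, hE]
end

section
/- Let g be a perfect Lie algebra with zero center. The holomorph h(g) is complete if and only if C(Der(g)/ad(g)) = 0. -/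
section HolomorphDef

variable (K : Type*) (L : Type*) [Field K] [LieRing L] [LieAlgebra K L]

/-- The bracket `[(x,d),(y,e)] = ([x,y] + d(y) - e(x), [d,e])` on `g ⊕ Der(g)`. -/
def holoBracket (h h' : L × LieDerivation K L L) : L × LieDerivation K L L :=
  (⁅h.1, h'.1⁆ + h.2 h'.1 - h'.2 h.1, ⁅h.2, h'.2⁆)

variable {K L}

lemma holoBracket_add_left (x y z : L × LieDerivation K L L) :
    holoBracket K L (x + y) z = holoBracket K L x z + holoBracket K L y z := by
  simp only [holoBracket, Prod.ext_iff, Prod.fst_add, Prod.snd_add, add_lie,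
    LieDerivation.coe_add, Pi.add_apply, map_add]
  constructor
  · abel
  · simp [add_lie]

lemma holoBracket_add_right (x y z : L × LieDerivation K L L) :
    holoBracket K L x (y + z) = holoBracket K L x y + holoBracket K L x z := by
  simp only [holoBracket, Prod.ext_iff, Prod.fst_add, Prod.snd_add, lie_add,
    LieDerivation.coe_add, Pi.add_apply, map_add]
  constructor
  · abel
  · simp [lie_add]

lemma holoBracket_self (x : L × LieDerivation K L L) : holoBracket K L x x = 0 := by
  simp [holoBracket, Prod.ext_iff]

lemma holoBracket_leibniz (x y z : L × LieDerivation K L L) :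
    holoBracket K L x (holoBracket K L y z) =
      holoBracket K L (holoBracket K L x y) z + holoBracket K L y (holoBracket K L x z) := by
  simp only [holoBracket, Prod.ext_iff, Prod.fst_add, Prod.snd_add,
    LieDerivation.commutator_apply, map_add, map_sub, lie_add, lie_sub, add_lie, sub_lie,
    LieDerivation.apply_lie_eq_add]
  constructor
  · rw [leibniz_lie x.1 y.1 z.1, ← lie_skew (z.2 x.1) y.1]
    abel
  · rw [leibniz_lie]

lemma holoBracket_smul (t : K) (x y : L × LieDerivation K L L) :
    holoBracket K L x (t • y) = t • holoBracket K L x y := by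
  refine Prod.ext ?_ ?_
  · simp [holoBracket, smul_add, smul_sub]
  · exact lie_smul t x.2 y.2

variable (K L)

/-- The holomorph `h(g) = g ⋊ Der(g)` of a Lie algebra `g`: as a vector space it is
the direct sum `g ⊕ Der(g)`. -/
def Holomorph := L × LieDerivation K L L

namespace Holomorph

instance : AddCommGroup (Holomorph K L) :=
  inferInstanceAs (AddCommGroup (L × LieDerivation K L L))

instance : Module K (Holomorph K L) :=
  inferInstanceAs (Module K (L × LieDerivation K L L))

instance : LieRing (Holomorph K L) where
  bracket h h' := holoBracket K L h h'
  add_lie := holoBracket_add_left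
  lie_add := holoBracket_add_right
  lie_self := holoBracket_self
  leibniz_lie := holoBracket_leibniz

instance : LieAlgebra K (Holomorph K L) where
  lie_smul := holoBracket_smul

variable {K L}

/-- The element `(x, d)` (also written `x + d`) of the holomorph. -/
def mk (x : L) (d : LieDerivation K L L) : Holomorph K L := (x, d)

/-- The `g`-component of an element of the holomorph. -/
def fst (h : Holomorph K L) : L := (show L × LieDerivation K L L from h).1

/-- The `Der(g)`-component of an element of the holomorph. -/
def snd (h : Holomorph K L) : LieDerivation K L L := (show L × LieDerivation K L L from h).2

@[simp] lemma fst_mk (x : L) (d : LieDerivation K L L) : (mk x d).fst = x := rfl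
@[simp] lemma snd_mk (x : L) (d : LieDerivation K L L) : (mk x d).snd = d := rfl

lemma ext {h h' : Holomorph K L} (h1 : h.fst = h'.fst) (h2 : h.snd = h'.snd) : h = h' :=
  Prod.ext h1 h2

/-- The bracket of the holomorph is `[(x,d),(y,e)] = ([x,y] + d(y) - e(x), [d,e])`. -/
lemma bracket_def (x y : L) (d e : LieDerivation K L L) :
    ⁅mk x d, mk y e⁆ = mk (⁅x, y⁆ + d y - e x) ⁅d, e⁆ := rfl

end Holomorph

end HolomorphDef

/-- A Lie algebra is complete if its center is zero and every derivation is inner. -/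
def IsCompleteLieAlgebra (K : Type*) (M : Type*) [Field K] [LieRing M] [LieAlgebra K M] : Prop :=
  LieAlgebra.center K M = ⊥ ∧
    ∀ D : LieDerivation K M M, ∃ m : M, D = LieDerivation.ad K M m

/-!
Let `Der L` act on `L` by evaluation, and call a derivation `P : Der L → L` of this module a
cocycle; the inner ones are `D ↦ D x`. The derivation `T = P ∘ ad` of `L` satisfies
`⁅T, D⁆ = ad (P D)`, and when `L` has trivial center this makes `P ↦ T + ad L` a bijection from
cocycles onto the center of `Der L / ad L` sending inner cocycles to `0`.

Every cocycle `P` also gives the derivation `(x, D) ↦ (P D, -ad (P D))` of the holomorph, which is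
inner exactly when `P` is. Conversely, perfectness forces a derivation of the holomorph to map `L`
into `L`; after subtracting some `ad (0, A)` it vanishes on `L`, and is then of the above form.
So both sides of the equivalence say that every cocycle `Der L → L` is inner.
-/

namespace LieAlgebra

variable {R L : Type*} [CommRing R] [LieRing L] [LieAlgebra R L]

lemma mk_mem_center_quotient_iff (I : LieIdeal R L) (x : L) :
    LieSubmodule.Quotient.mk' I x ∈ center R (L ⧸ I) ↔ ∀ y, ⁅x, y⁆ ∈ I := by
  rw [LieModule.mem_maxTrivSubmodule]
  refine ⟨fun h y => ?_, fun h η => ?_⟩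
  · rw [← lie_skew, neg_mem_iff, ← LieSubmodule.Quotient.mk_eq_zero]
    exact h (LieSubmodule.Quotient.mk' I y)
  · obtain ⟨y, rfl⟩ := LieSubmodule.Quotient.surjective_mk' I η
    exact (LieSubmodule.Quotient.mk_eq_zero I).mpr (by rw [← lie_skew]; exact neg_mem (h y))

lemma center_quotient_eq_bot_iff (I : LieIdeal R L) :
    center R (L ⧸ I) = ⊥ ↔ ∀ x, (∀ y, ⁅x, y⁆ ∈ I) → x ∈ I := by
  refine ⟨fun h x hx => ?_, fun h => (LieSubmodule.eq_bot_iff _).mpr fun η hη => ?_⟩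
  · rw [← mk_mem_center_quotient_iff, h, LieSubmodule.mem_bot] at hx
    exact (LieSubmodule.Quotient.mk_eq_zero I).mp hx
  · obtain ⟨x, rfl⟩ := LieSubmodule.Quotient.surjective_mk' I η
    exact (LieSubmodule.Quotient.mk_eq_zero I).mpr (h x ((mk_mem_center_quotient_iff I x).mp hη))

lemma linearMap_eq_zero_of_map_lie_eq_zero {M : Type*} [AddCommGroup M] [Module R M]
    (hperf : ⁅(⊤ : LieIdeal R L), (⊤ : LieIdeal R L)⁆ = ⊤) (f : L →ₗ[R] M)
    (hf : ∀ x y : L, f ⁅x, y⁆ = 0) : f = 0 := by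
  have hspan : (⁅(⊤ : LieIdeal R L), (⊤ : LieIdeal R L)⁆ : LieIdeal R L).toSubmodule ≤
      LinearMap.ker f := by
    rw [LieSubmodule.lieIdeal_oper_eq_linear_span, Submodule.span_le]
    rintro _ ⟨⟨x, -⟩, ⟨y, -⟩, rfl⟩
    exact hf x y
  rw [hperf] at hspan
  ext x
  exact hspan (LieSubmodule.mem_top x)

end LieAlgebra

namespace LieDerivation

section Module

variable {R L : Type*} [CommRing R] [LieRing L] [LieAlgebra R L]

instance instLieRingModuleSelf : LieRingModule (LieDerivation R L L) L where
  bracket D x := D x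
  add_lie _ _ _ := rfl
  lie_add D := map_add D
  leibniz_lie D₁ D₂ x := by
    change D₁ (D₂ x) = ⁅D₁, D₂⁆ x + D₂ (D₁ x)
    rw [commutator_apply, sub_add_cancel]

@[simp] lemma lie_eq_apply (D : LieDerivation R L L) (x : L) : ⁅D, x⁆ = D x := rfl

instance instLieModuleSelf : LieModule R (LieDerivation R L L) L where
  smul_lie _ _ _ := rfl
  lie_smul t D := map_smul D t

def compAd (P : LieDerivation R (LieDerivation R L L) L) : LieDerivation R L L where
  toLinearMap := (P : LieDerivation R L L →ₗ[R] L) ∘ₗ (ad R L : L →ₗ[R] LieDerivation R L L)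
  leibniz' y z := by
    simp only [LinearMap.coe_comp, Function.comp_apply, LieHom.coe_toLinearMap, LieHom.map_lie,
      coeFn_coe, apply_lie_eq_sub, lie_eq_apply, ad_apply_apply]

@[simp] lemma compAd_apply (P : LieDerivation R (LieDerivation R L L) L) (x : L) :
    P.compAd x = P (ad R L x) := rfl

lemma lie_compAd (P : LieDerivation R (LieDerivation R L L) L) (D : LieDerivation R L L) :
    ⁅P.compAd, D⁆ = ad R L (P D) := by
  ext z
  rw [commutator_apply, compAd_apply, compAd_apply, ← lie_der_ad_eq_ad_der, apply_lie_eq_sub,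
    lie_eq_apply, lie_eq_apply, ad_apply_apply, ad_apply_apply, ← lie_skew z]
  abel

lemma compAd_inner (x : L) : (inner R (LieDerivation R L L) L x).compAd = -ad R L x := by
  ext z
  rw [compAd_apply, inner_apply_apply, lie_eq_apply, ad_apply_apply, neg_apply, ad_apply_apply,
    lie_skew]

lemma compAd_injective (hc : LieAlgebra.center R L = ⊥) :
    Function.Injective (compAd (R := R) (L := L)) := fun P Q h =>
  ext fun D => injective_ad_of_center_eq_bot hc (by rw [← lie_compAd, h, lie_compAd])

end Module

variable {K L : Type*} [Field K] [LieRing L] [LieAlgebra K L]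

lemma exists_compAd_eq (hc : LieAlgebra.center K L = ⊥) {T : LieDerivation K L L}
    (hT : ∀ D, ⁅T, D⁆ ∈ (ad K L).idealRange) :
    ∃ P : LieDerivation K (LieDerivation K L L) L, P.compAd = T := by
  have had := injective_ad_of_center_eq_bot (R := K) hc
  obtain ⟨g, hg⟩ := (ad K L : L →ₗ[K] LieDerivation K L L).exists_leftInverse_of_injective
    (LinearMap.ker_eq_bot_of_injective had)
  have hadg : ∀ D, ad K L (g ⁅T, D⁆) = ⁅T, D⁆ := fun D => by
    obtain ⟨x, hx⟩ := mem_ad_idealRange_iff.mp (hT D)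
    rw [← hx]
    exact congrArg (ad K L) (LinearMap.congr_fun hg x)
  let P : LieDerivation K (LieDerivation K L L) L :=
    { toLinearMap := g ∘ₗ LieAlgebra.ad K (LieDerivation K L L) T
      leibniz' D E := had <| by
        simp only [LinearMap.coe_comp, Function.comp_apply, LieAlgebra.ad_apply, lie_eq_apply,
          map_sub, ← lie_der_ad_eq_ad_der, hadg]
        rw [leibniz_lie T D E, ← lie_skew ⁅T, D⁆ E]
        abel }
  refine ⟨P, ext fun z => had ?_⟩
  rw [compAd_apply, ← lie_der_ad_eq_ad_der]
  exact hadg (ad K L z)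

lemma center_quotient_ad_eq_bot_iff_forall_eq_inner (hc : LieAlgebra.center K L = ⊥) :
    LieAlgebra.center K (LieDerivation K L L ⧸ (ad K L).idealRange) = ⊥ ↔
      ∀ P : LieDerivation K (LieDerivation K L L) L, ∃ x, P = inner K _ L x := by
  rw [LieAlgebra.center_quotient_eq_bot_iff]
  refine ⟨fun h P => ?_, fun h T hT => ?_⟩
  · obtain ⟨y, hy⟩ := mem_ad_idealRange_iff.mp <|
      h P.compAd fun D => by rw [lie_compAd]; exact mem_ad_idealRange_iff.mpr ⟨_, rfl⟩
    refine ⟨-y, compAd_injective hc ?_⟩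
    rw [compAd_inner, map_neg, neg_neg, hy]
  · obtain ⟨P, rfl⟩ := exists_compAd_eq hc hT
    obtain ⟨x, rfl⟩ := h P
    rw [compAd_inner]
    exact neg_mem (mem_ad_idealRange_iff.mpr ⟨x, rfl⟩)

end LieDerivation

namespace Holomorph

variable {K L : Type*} [Field K] [LieRing L] [LieAlgebra K L]

@[simp] lemma fst_zero : (0 : Holomorph K L).fst = 0 := rfl
@[simp] lemma fst_add (h h' : Holomorph K L) : (h + h').fst = h.fst + h'.fst := rfl
@[simp] lemma snd_add (h h' : Holomorph K L) : (h + h').snd = h.snd + h'.snd := rfl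
@[simp] lemma fst_sub (h h' : Holomorph K L) : (h - h').fst = h.fst - h'.fst := rfl
@[simp] lemma snd_sub (h h' : Holomorph K L) : (h - h').snd = h.snd - h'.snd := rfl
@[simp] lemma fst_smul (t : K) (h : Holomorph K L) : (t • h).fst = t • h.fst := rfl
@[simp] lemma snd_smul (t : K) (h : Holomorph K L) : (t • h).snd = t • h.snd := rfl
@[simp] lemma fst_lie (h h' : Holomorph K L) :
    ⁅h, h'⁆.fst = ⁅h.fst, h'.fst⁆ + h.snd h'.fst - h'.snd h.fst := rfl
@[simp] lemma snd_lie (h h' : Holomorph K L) : ⁅h, h'⁆.snd = ⁅h.snd, h'.snd⁆ := rfl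

@[simp] lemma mk_zero_zero : mk (0 : L) (0 : LieDerivation K L L) = 0 := rfl

lemma mk_fst_add_mk_snd (h : Holomorph K L) : mk h.fst 0 + mk 0 h.snd = h :=
  ext (add_zero h.fst) (zero_add h.snd)

variable (K L) in
def fstₗ : Holomorph K L →ₗ[K] L where
  toFun := fst
  map_add' _ _ := rfl
  map_smul' _ _ := rfl

variable (K L) in
def sndₗ : Holomorph K L →ₗ[K] LieDerivation K L L where
  toFun := snd
  map_add' _ _ := rfl
  map_smul' _ _ := rfl

variable (K L) in
def inl : L →ₗ[K] Holomorph K L where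
  toFun x := mk x 0
  map_add' _ _ := ext rfl (add_zero 0).symm
  map_smul' t _ := ext rfl (smul_zero t).symm

variable (K L) in
def inr : LieDerivation K L L →ₗ[K] Holomorph K L where
  toFun D := mk 0 D
  map_add' _ _ := ext (add_zero 0).symm rfl
  map_smul' t _ := ext (smul_zero t).symm rfl

@[simp] lemma fstₗ_apply (h : Holomorph K L) : fstₗ K L h = h.fst := rfl
@[simp] lemma sndₗ_apply (h : Holomorph K L) : sndₗ K L h = h.snd := rfl
@[simp] lemma inl_apply (x : L) : inl K L x = mk x 0 := rfl
@[simp] lemma inr_apply (D : LieDerivation K L L) : inr K L D = mk 0 D := rfl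

lemma center_eq_bot (hc : LieAlgebra.center K L = ⊥) :
    LieAlgebra.center K (Holomorph K L) = ⊥ := by
  refine (LieSubmodule.eq_bot_iff _).mpr fun h hh => ?_
  rw [LieModule.mem_maxTrivSubmodule] at hh
  have hfst : h.fst = 0 := by
    have hcen : h.fst ∈ LieAlgebra.center K L := by
      rw [LieModule.mem_maxTrivSubmodule]
      intro z
      simpa using congrArg fst (hh (mk 0 (LieDerivation.ad K L z)))
    rwa [hc, LieSubmodule.mem_bot] at hcen
  have hsnd : h.snd = 0 := LieDerivation.ext fun y => by
    simpa [hfst] using congrArg fst (hh (mk y 0))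
  exact ext hfst hsnd

def ofDerivation (P : LieDerivation K (LieDerivation K L L) L) :
    LieDerivation K (Holomorph K L) (Holomorph K L) where
  toFun h := mk (P h.snd) (-LieDerivation.ad K L (P h.snd))
  map_add' h h' := ext (by simp) (by simp [add_comm])
  map_smul' t h := ext (by simp) (by simp)
  leibniz' h h' := by
    apply ext
    · simp only [LinearMap.coe_mk, AddHom.coe_mk, fst_sub, fst_lie, snd_lie, fst_mk, snd_mk,
        LieDerivation.coe_neg, Pi.neg_apply, LieDerivation.ad_apply_apply, sub_neg_eq_add,
        LieDerivation.apply_lie_eq_sub, LieDerivation.lie_eq_apply]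
      rw [← lie_skew (P h'.snd) h.fst, ← lie_skew (P h.snd) h'.fst]
      abel
    · simp only [LinearMap.coe_mk, AddHom.coe_mk, snd_sub, snd_lie, snd_mk,
        LieDerivation.apply_lie_eq_sub, LieDerivation.lie_eq_apply, map_sub, lie_neg,
        LieDerivation.lie_der_ad_eq_ad_der]
      abel

@[simp] lemma ofDerivation_apply (P : LieDerivation K (LieDerivation K L L) L)
    (h : Holomorph K L) :
    ofDerivation P h = mk (P h.snd) (-LieDerivation.ad K L (P h.snd)) := rfl

def cocycle (D : LieDerivation K (Holomorph K L) (Holomorph K L)) :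
    LieDerivation K (LieDerivation K L L) L where
  toLinearMap := fstₗ K L ∘ₗ (D : Holomorph K L →ₗ[K] Holomorph K L) ∘ₗ inr K L
  leibniz' e f := by
    have h := congrArg fst (D.apply_lie_eq_sub (mk 0 e) (mk 0 f))
    simpa [bracket_def] using h

@[simp] lemma cocycle_apply (D : LieDerivation K (Holomorph K L) (Holomorph K L))
    (e : LieDerivation K L L) : cocycle D e = (D (mk 0 e)).fst := rfl

lemma cocycle_ofDerivation (P : LieDerivation K (LieDerivation K L L) L) :
    cocycle (ofDerivation P) = P :=
  LieDerivation.ext fun _ => rfl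

lemma cocycle_ad (m : Holomorph K L) :
    cocycle (LieDerivation.ad K (Holomorph K L) m) = LieDerivation.inner K _ L (-m.fst) :=
  LieDerivation.ext fun e => by simp

lemma eq_ofDerivation_cocycle (D : LieDerivation K (Holomorph K L) (Holomorph K L))
    (hD : ∀ x, D (mk x 0) = 0) : D = ofDerivation (cocycle D) := by
  refine LieDerivation.ext fun h => ?_
  have h0 : ofDerivation (cocycle D) (mk h.fst 0) = 0 := ext (by simp) (by simp)
  rw [← mk_fst_add_mk_snd h, map_add, map_add, hD, h0, zero_add, zero_add]
  refine ext rfl (LieDerivation.ext fun y => ?_)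
  -- `D` kills `⁅(0, e), (y, 0)⁆ = (e y, 0)`, which pins down `snd (D (0, e))`.
  have hy := congrArg fst (D.apply_lie_eq_sub (mk 0 h.snd) (mk y 0))
  simp only [bracket_def, zero_lie, zero_add, LieDerivation.coe_zero, Pi.zero_apply, sub_zero,
    lie_zero, hD, fst_zero, zero_sub, lie_skew, fst_lie, fst_mk, snd_mk] at hy
  rw [ofDerivation_apply, snd_mk, LieDerivation.neg_apply, LieDerivation.ad_apply_apply,
    cocycle_apply]
  exact eq_neg_of_add_eq_zero_right hy.symm

lemma ofDerivation_inner (x : L) :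
    ofDerivation (LieDerivation.inner K _ L x) =
      LieDerivation.ad K (Holomorph K L) (mk (-x) (LieDerivation.ad K L x)) := by
  rw [eq_ofDerivation_cocycle (LieDerivation.ad K _ _) fun y => ?_, cocycle_ad, fst_mk, neg_neg]
  rw [LieDerivation.ad_apply_apply, bracket_def]
  exact ext (by simp only [fst_mk, neg_lie, LieDerivation.ad_apply_apply,
    LieDerivation.zero_apply, sub_zero, neg_add_cancel, fst_zero]) (lie_zero _)

lemma snd_apply_mk_zero (hperf : ⁅(⊤ : LieIdeal K L), (⊤ : LieIdeal K L)⁆ = ⊤)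
    (D : LieDerivation K (Holomorph K L) (Holomorph K L)) (x : L) : (D (mk x 0)).snd = 0 := by
  have hB := LieAlgebra.linearMap_eq_zero_of_map_lie_eq_zero hperf
    (sndₗ K L ∘ₗ (D : Holomorph K L →ₗ[K] Holomorph K L) ∘ₗ inl K L) fun y z => by
      have h := congrArg snd (D.apply_lie_eq_sub (mk y 0) (mk z 0))
      simpa [bracket_def] using h
  exact LinearMap.congr_fun hB x

lemma exists_apply_mk_zero_eq_lie (hperf : ⁅(⊤ : LieIdeal K L), (⊤ : LieIdeal K L)⁆ = ⊤)
    (D : LieDerivation K (Holomorph K L) (Holomorph K L)) :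
    ∃ A : LieDerivation K L L, ∀ x, D (mk x 0) = ⁅mk 0 A, mk x 0⁆ := by
  let A : LieDerivation K L L :=
    { toLinearMap := fstₗ K L ∘ₗ (D : Holomorph K L →ₗ[K] Holomorph K L) ∘ₗ inl K L
      leibniz' y z := by
        have h := congrArg fst (D.apply_lie_eq_sub (mk y 0) (mk z 0))
        simpa [bracket_def, snd_apply_mk_zero hperf] using h }
  exact ⟨A, fun x =>
    ext (by simp [bracket_def, A]) (by simp [bracket_def, snd_apply_mk_zero hperf])⟩

lemma isCompleteLieAlgebra_iff_forall_eq_inner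
    (hperf : ⁅(⊤ : LieIdeal K L), (⊤ : LieIdeal K L)⁆ = ⊤)
    (hc : LieAlgebra.center K L = ⊥) :
    IsCompleteLieAlgebra K (Holomorph K L) ↔
      ∀ P : LieDerivation K (LieDerivation K L L) L, ∃ x, P = LieDerivation.inner K _ L x := by
  refine ⟨fun h P => ?_, fun h => ⟨center_eq_bot hc, fun D => ?_⟩⟩
  · obtain ⟨m, hm⟩ := h.2 (ofDerivation P)
    exact ⟨-m.fst, by rw [← cocycle_ad, ← hm, cocycle_ofDerivation]⟩
  · obtain ⟨A, hA⟩ := exists_apply_mk_zero_eq_lie hperf D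
    set D₁ := D - LieDerivation.ad K _ (mk 0 A)
    have hD₁ : ∀ x, D₁ (mk x 0) = 0 := fun x => by
      rw [LieDerivation.sub_apply, hA, LieDerivation.ad_apply_apply, sub_self]
    obtain ⟨x, hx⟩ := h (cocycle D₁)
    refine ⟨mk 0 A + mk (-x) (LieDerivation.ad K L x), ?_⟩
    rw [map_add, ← ofDerivation_inner, ← hx, ← eq_ofDerivation_cocycle D₁ hD₁, add_sub_cancel]

end Holomorph

/-- Let `g` be perfect with zero center. The holomorph `h(g)` is complete if and only
if the outer derivation algebra `Der(g)/ad(g)` has zero center. -/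
theorem holomorph_isComplete_iff_center_outer_eq_bot (K : Type*) (L : Type*) [Field K]
    [LieRing L] [LieAlgebra K L] (hperf : ⁅(⊤ : LieIdeal K L), (⊤ : LieIdeal K L)⁆ = ⊤)
    (hc : LieAlgebra.center K L = ⊥) :
    IsCompleteLieAlgebra K (Holomorph K L) ↔
      LieAlgebra.center K (LieDerivation K L L ⧸ (LieDerivation.ad K L).idealRange) = ⊥ :=
  (Holomorph.isCompleteLieAlgebra_iff_forall_eq_inner hperf hc).trans
    (LieDerivation.center_quotient_ad_eq_bot_iff_forall_eq_inner hc).symm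
end
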